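/- arXiv:1401.2530 — 7 statements merged into one kernel-verified Lean document; each statement's English description precedes it below -/
import Mathlib

section
/- Let s = I(0_K, a_1, ..., a_{T-1}) and s' = I(1_K, a_1, ..., a_{T-1}) be (K,T)-interleaved sequences of period KT, where 0_K is the all-zero and 1_K the all-one sequence of period K. If τ = τ_1·T + τ_2 with τ_2 = 0, then R_{s'}(τ) = R_s(τ) = K + Σ_{i=1}^{T-1} R_{a_i}(τ_1). -/
/-- Periodic (cross-)correlation of binary sequences of period `N`. -/
def corr (N : ℕ) (a b : ℕ → ZMod 2) (τ : ℕ) : ℤ :=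
  ∑ t ∈ Finset.range N, (-1 : ℤ) ^ ((a t + b (t + τ)).val)

/-- Balance difference `d(a) = 2|support(a)| - K` of a sequence of period `K`. -/
def bal (K : ℕ) (a : ℕ → ZMod 2) : ℤ :=
  2 * ((((Finset.range K).filter (fun k => a k = 1)).card : ℤ)) - (K : ℤ)

lemma sum_range_mul' (K T : ℕ) (f : ℕ → ℤ) :
    ∑ t ∈ Finset.range (K * T), f t
      = ∑ k ∈ Finset.range K, ∑ i ∈ Finset.range T, f (k * T + i) := by
  induction K with
  | zero => simp
  | succ n ih =>
    rw [Nat.succ_mul, Finset.sum_range_add, ih, Finset.sum_range_succ]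

lemma key (K T : ℕ) (hT : 0 < T) (a : ℕ → ℕ → ZMod 2) (s : ℕ → ZMod 2)
    (c : ZMod 2) (hs0 : ∀ k, s (k * T) = c)
    (hcol : ∀ k i, 1 ≤ i → i < T → s (k * T + i) = a i k) (τ1 : ℕ) :
    corr (K * T) s s (τ1 * T) =
      (K : ℤ) + ∑ i ∈ Finset.Ico 1 T, corr K (a i) (a i) τ1 := by
  unfold corr
  rw [sum_range_mul']
  have step : ∀ k ∈ Finset.range K,
      (∑ i ∈ Finset.range T, (-1 : ℤ) ^ ((s (k * T + i) + s (k * T + i + τ1 * T)).val))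
        = 1 + ∑ i ∈ Finset.Ico 1 T,
            (-1 : ℤ) ^ ((a i k + a i (k + τ1)).val) := by
    intro k _
    rw [Finset.range_eq_Ico, Finset.sum_eq_sum_Ico_succ_bot hT]
    congr 1
    · have h1 : k * T + 0 + τ1 * T = (k + τ1) * T := by ring
      rw [add_zero] at h1 ⊢
      rw [h1, hs0, hs0]
      have : c + c = 0 := by
        have : (2 : ZMod 2) = 0 := by decide
        calc c + c = 2 * c := by ring
        _ = 0 := by rw [this, zero_mul]
      rw [this]
      simp
    · apply Finset.sum_congr rfl
      intro i hi
      simp only [Finset.mem_Ico] at hi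
      have h1 : k * T + i + τ1 * T = (k + τ1) * T + i := by ring
      rw [h1, hcol k i hi.1 hi.2, hcol (k + τ1) i hi.1 hi.2]
  rw [Finset.sum_congr rfl step, Finset.sum_add_distrib, Finset.sum_const,
    Finset.card_range, nsmul_eq_mul, mul_one, Finset.sum_comm]


/-- For `τ2 = 0`: `R_{s'}(τ) = R_s(τ) = K + Σ_{i=1}^{T-1} R_{a_i}(τ1)`. -/
theorem stmt2 (K T : ℕ) (hK : 0 < K) (hT : 0 < T)
    (a : ℕ → ℕ → ZMod 2) (s s' : ℕ → ZMod 2)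
    (ha : ∀ i, Function.Periodic (a i) K)
    (hs : Function.Periodic s (K * T)) (hs' : Function.Periodic s' (K * T))
    (hs0 : ∀ k, s (k * T) = 0) (hs'0 : ∀ k, s' (k * T) = 1)
    (hcol : ∀ k i, 1 ≤ i → i < T → s (k * T + i) = a i k)
    (hcol' : ∀ k i, 1 ≤ i → i < T → s' (k * T + i) = a i k)
    (τ1 : ℕ) :
    corr (K * T) s' s' (τ1 * T) = corr (K * T) s s (τ1 * T) ∧
    corr (K * T) s s (τ1 * T) =
      (K : ℤ) + ∑ i ∈ Finset.Ico 1 T, corr K (a i) (a i) τ1 := by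
  have h1 := key K T hT a s 0 hs0 hcol τ1
  have h2 := key K T hT a s' 1 hs'0 hcol' τ1
  exact ⟨h2.trans h1.symm, h1⟩
end

section
/- Let s = I(0_K, a_1, ..., a_{T-1}) and s' = I(1_K, a_1, ..., a_{T-1}), with τ = τ_1·T + τ_2, 1 ≤ τ_2 ≤ T-1. Then R_s(τ) = Σ_{i=1}^{T-τ_2-1} R_{a_i a_{i+τ_2}}(τ_1) + Σ_{i=T-τ_2+1}^{T-1} R_{a_i a_{i-(T-τ_2)}}(τ_1+1) - d(a_{τ_2}) - d(a_{T-τ_2}). -/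
lemma sum_double (K T : ℕ) (f : ℕ → ℤ) :
    ∑ t ∈ Finset.range (K * T), f t
      = ∑ i ∈ Finset.range T, ∑ k ∈ Finset.range K, f (k * T + i) := by
  have h : ∑ t ∈ Finset.range (K * T), f t
      = ∑ k ∈ Finset.range K, ∑ i ∈ Finset.range T, f (k * T + i) := by
    induction K with
    | zero => simp
    | succ n ih =>
      rw [Nat.succ_mul, Finset.sum_range_add, ih, Finset.sum_range_succ]
  rw [h, Finset.sum_comm]

lemma shift_step (K c : ℕ) (h : ℕ → ℤ) (hp : ∀ n, h (n + K) = h n) :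
    ∑ k ∈ Finset.range K, h (k + (c + 1)) = ∑ k ∈ Finset.range K, h (k + c) := by
  cases K with
  | zero => simp
  | succ m =>
    rw [Finset.sum_range_succ, Finset.sum_range_succ']
    have h1 : h (m + (c + 1)) = h (0 + c) := by
      rw [zero_add]
      have := hp c
      rw [← this]
      ring_nf
    rw [h1]
    congr 1
    apply Finset.sum_congr rfl
    intro k _
    ring_nf

lemma shift_sum (K : ℕ) (h : ℕ → ℤ) (hp : ∀ n, h (n + K) = h n) (c : ℕ) :
    ∑ k ∈ Finset.range K, h (k + c) = ∑ k ∈ Finset.range K, h k := by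
  induction c with
  | zero => simp
  | succ c ih => rw [shift_step K c h hp, ih]

lemma bal_sum (K : ℕ) (b : ℕ → ZMod 2) :
    ∑ k ∈ Finset.range K, (-1 : ℤ) ^ ((b k).val) = - bal K b := by
  have hx : ∀ x : ZMod 2, x = 0 ∨ x = 1 := by decide
  have h : ∀ k, (-1 : ℤ) ^ ((b k).val)
      = 1 - 2 * (if b k = 1 then (1 : ℤ) else 0) := by
    intro k
    have hv0 : (0 : ZMod 2).val = 0 := rfl
    have hv1 : (1 : ZMod 2).val = 1 := rfl
    rcases hx (b k) with h | h <;> simp [h, hv0, hv1]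
  rw [Finset.sum_congr rfl (fun k _ => h k)]
  rw [Finset.sum_sub_distrib, Finset.sum_const, ← Finset.mul_sum, Finset.sum_boole]
  simp [bal]

/-- Expansion of `R_s(τ)` in terms of column cross-correlations, `1 ≤ τ2 ≤ T-1`. -/
theorem stmt4 (K T : ℕ) (hK : 0 < K) (hT : 0 < T)
    (a : ℕ → ℕ → ZMod 2) (s s' : ℕ → ZMod 2)
    (ha : ∀ i, Function.Periodic (a i) K)
    (hs : Function.Periodic s (K * T)) (hs' : Function.Periodic s' (K * T))
    (hs0 : ∀ k, s (k * T) = 0) (hs'0 : ∀ k, s' (k * T) = 1)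
    (hcol : ∀ k i, 1 ≤ i → i < T → s (k * T + i) = a i k)
    (hcol' : ∀ k i, 1 ≤ i → i < T → s' (k * T + i) = a i k)
    (τ1 τ2 : ℕ) (h1 : 1 ≤ τ2) (h2 : τ2 < T) :
    corr (K * T) s s (τ1 * T + τ2) =
      (∑ i ∈ Finset.Ico 1 (T - τ2), corr K (a i) (a (i + τ2)) τ1) +
      (∑ i ∈ Finset.Ico (T - τ2 + 1) T, corr K (a i) (a (i - (T - τ2))) (τ1 + 1)) -
      bal K (a τ2) - bal K (a (T - τ2)) := by
  have hTτ2 : 1 ≤ T - τ2 := by omega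
  have hτ2T : T - τ2 < T := by omega
  set F : ℕ → ℤ := fun i =>
    ∑ k ∈ Finset.range K, (-1 : ℤ) ^ ((s (k * T + i) + s (k * T + i + (τ1 * T + τ2))).val)
    with hF
  have hcorr : corr (K * T) s s (τ1 * T + τ2) = ∑ i ∈ Finset.range T, F i := by
    unfold corr
    rw [sum_double]
  -- claim for i = 0
  have c0 : F 0 = - bal K (a τ2) := by
    have : ∀ k, (-1 : ℤ) ^ ((s (k * T + 0) + s (k * T + 0 + (τ1 * T + τ2))).val)
        = (-1 : ℤ) ^ ((a τ2 (k + τ1)).val) := by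
      intro k
      have e1 : k * T + 0 + (τ1 * T + τ2) = (k + τ1) * T + τ2 := by ring
      rw [e1, hcol (k + τ1) τ2 h1 h2, add_zero, hs0 k, zero_add]
    rw [hF]
    simp only [this]
    rw [shift_sum K (fun k => (-1 : ℤ) ^ ((a τ2 k).val))
        (fun n => by simp [ha τ2 n]) τ1]
    exact bal_sum K (a τ2)
  -- claim for i = T - τ2
  have cT : F (T - τ2) = - bal K (a (T - τ2)) := by
    have : ∀ k, (-1 : ℤ) ^ ((s (k * T + (T - τ2)) + s (k * T + (T - τ2) + (τ1 * T + τ2))).val)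
        = (-1 : ℤ) ^ ((a (T - τ2) k).val) := by
      intro k
      have e1 : k * T + (T - τ2) + (τ1 * T + τ2) = (k + τ1 + 1) * T := by
        have : T - τ2 + τ2 = T := by omega
        nlinarith [this]
      rw [e1, hs0 (k + τ1 + 1), hcol k (T - τ2) hTτ2 hτ2T, add_zero]
    rw [hF]
    simp only [this]
    exact bal_sum K (a (T - τ2))
  -- claim for 1 ≤ i < T - τ2
  have cMid : ∀ i ∈ Finset.Ico 1 (T - τ2), F i = corr K (a i) (a (i + τ2)) τ1 := by
    intro i hi
    rw [Finset.mem_Ico] at hi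
    rw [hF]
    unfold corr
    apply Finset.sum_congr rfl
    intro k _
    have e1 : k * T + i + (τ1 * T + τ2) = (k + τ1) * T + (i + τ2) := by ring
    rw [e1, hcol k i hi.1 (by omega), hcol (k + τ1) (i + τ2) (by omega) (by omega)]
  -- claim for T - τ2 < i < T
  have cHi : ∀ i ∈ Finset.Ico (T - τ2 + 1) T, F i = corr K (a i) (a (i - (T - τ2))) (τ1 + 1) := by
    intro i hi
    rw [Finset.mem_Ico] at hi
    rw [hF]
    unfold corr
    apply Finset.sum_congr rfl
    intro k _
    have e1 : k * T + i + (τ1 * T + τ2) = (k + (τ1 + 1)) * T + (i - (T - τ2)) := by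
      have h3 : i - (T - τ2) + T = i + τ2 := by omega
      have h4 : i - (T - τ2) ≤ i := Nat.sub_le _ _
      nlinarith [h3, h4]
    rw [e1, hcol k i (by omega) hi.2, hcol (k + (τ1 + 1)) (i - (T - τ2)) (by omega) (by omega)]
  -- assemble
  rw [hcorr, Finset.range_eq_Ico,
    ← Finset.sum_Ico_consecutive F (Nat.zero_le (T - τ2)) (le_of_lt hτ2T),
    Finset.sum_eq_sum_Ico_succ_bot (by omega : 0 < T - τ2) F,
    Finset.sum_eq_sum_Ico_succ_bot hτ2T F,
    Finset.sum_congr rfl cMid, Finset.sum_congr rfl cHi, c0, cT]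
  ring
end

section
/- Let s = I(0_K, a_1, ..., a_{T-1}) and s' = I(1_K, a_1, ..., a_{T-1}). The cross-correlation satisfies R_{ss'}(0) = KT - 2K, and for τ = τ_1·T with τ ≠ 0, R_{ss'}(τ) = R_s(τ) - 2K. -/
/-- `R_{ss'}(0) = KT - 2K`; for nonzero `τ = τ1 T`, `R_{ss'}(τ) = R_s(τ) - 2K`. -/
theorem stmt5 (K T : ℕ) (hK : 0 < K) (hT : 0 < T)
    (a : ℕ → ℕ → ZMod 2) (s s' : ℕ → ZMod 2)
    (ha : ∀ i, Function.Periodic (a i) K)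
    (hs : Function.Periodic s (K * T)) (hs' : Function.Periodic s' (K * T))
    (hs0 : ∀ k, s (k * T) = 0) (hs'0 : ∀ k, s' (k * T) = 1)
    (hcol : ∀ k i, 1 ≤ i → i < T → s (k * T + i) = a i k)
    (hcol' : ∀ k i, 1 ≤ i → i < T → s' (k * T + i) = a i k) :
    corr (K * T) s s' 0 = (K : ℤ) * T - 2 * K ∧
    ∀ τ1 : ℕ, τ1 * T ≠ 0 →
      corr (K * T) s s' (τ1 * T) = corr (K * T) s s (τ1 * T) - 2 * K := by
  have count_mult : ((Finset.range (K * T)).filter (fun t => t % T = 0)).card = K := by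
    have himg : (Finset.range (K * T)).filter (fun t => t % T = 0)
        = (Finset.range K).image (· * T) := by
      ext t
      simp only [Finset.mem_filter, Finset.mem_range, Finset.mem_image]
      constructor
      · rintro ⟨h1, h2⟩
        refine ⟨t / T, ?_, ?_⟩
        · exact (Nat.div_lt_iff_lt_mul hT).mpr h1
        · rw [Nat.div_mul_cancel (Nat.dvd_of_mod_eq_zero h2)]
      · rintro ⟨k, hk, rfl⟩
        exact ⟨(Nat.mul_lt_mul_right hT).mpr hk, Nat.mul_mod_left k T⟩
    rw [himg, Finset.card_image_of_injective _ fun x y h =>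
      Nat.eq_of_mul_eq_mul_right hT h, Finset.card_range]
  have key : ∀ τ1 : ℕ,
      corr (K * T) s s' (τ1 * T) = corr (K * T) s s (τ1 * T) - 2 * K := by
    intro τ1
    unfold corr
    have hsum : ∀ t ∈ Finset.range (K * T),
        (-1 : ℤ) ^ ((s t + s' (t + τ1 * T)).val)
        = (-1 : ℤ) ^ ((s t + s (t + τ1 * T)).val)
          + (if t % T = 0 then (-2 : ℤ) else 0) := by
      intro t _
      have ht : t = t / T * T + t % T := (Nat.div_add_mod' t T).symm
      have hshift : t + τ1 * T = (t / T + τ1) * T + t % T := by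
        conv_lhs => rw [ht]
        ring
      by_cases h0 : t % T = 0
      · have e : t + τ1 * T = (t / T + τ1) * T := by rw [hshift, h0, Nat.add_zero]
        have hst : s t = 0 := by
          conv_lhs => rw [ht, h0]
          rw [Nat.add_zero]; exact hs0 _
        rw [if_pos h0, hst, e, hs'0, hs0]
        norm_num [ZMod.val_one]
      · have hlt : t % T < T := Nat.mod_lt t hT
        have hge : 1 ≤ t % T := Nat.one_le_iff_ne_zero.mpr h0
        have h1 : s' (t + τ1 * T) = a (t % T) (t / T + τ1) := by
          rw [hshift]; exact hcol' _ _ hge hlt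
        have h2 : s (t + τ1 * T) = a (t % T) (t / T + τ1) := by
          rw [hshift]; exact hcol _ _ hge hlt
        rw [if_neg h0, add_zero, h1, h2]
    rw [Finset.sum_congr rfl hsum, Finset.sum_add_distrib, ← Finset.sum_filter,
      Finset.sum_const, count_mult]
    push_cast
    ring
  constructor
  · have h0 : corr (K * T) s s 0 = (K : ℤ) * T := by
      unfold corr
      simp [CharTwo.add_self_eq_zero, Finset.sum_const]
    have := key 0
    rw [Nat.zero_mul] at this
    rw [this, h0]
  · intro τ1 _
    exact key τ1
end

section
/- Let s = I(0_K, a_1, ..., a_{T-1}) and s' = I(1_K, a_1, ..., a_{T-1}). For every τ = τ_1·T + τ_2 with 1 ≤ τ_2 ≤ T-1, the equality R_{s's}(τ) = R_{ss'}(τ) holds if and only if d(a_{T-τ_2}) = d(a_{τ_2}). -/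
lemma aux_split (F : ℕ → ℤ) (K T : ℕ) :
    ∑ t ∈ Finset.range (K * T), F t
      = ∑ k ∈ Finset.range K, ∑ i ∈ Finset.range T, F (k * T + i) := by
  induction K with
  | zero => simp
  | succ K ih =>
      rw [Nat.succ_mul, Finset.sum_range_add, ih, Finset.sum_range_succ]

lemma aux_bal (K : ℕ) (b : ℕ → ZMod 2) :
    ∑ k ∈ Finset.range K, ((-1 : ℤ)) ^ ((b k).val) = -(bal K b) := by
  have h : ∀ x : ZMod 2, ((-1 : ℤ)) ^ x.val = 1 - 2 * (if x = 1 then 1 else 0) := by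
    decide
  calc ∑ k ∈ Finset.range K, ((-1 : ℤ)) ^ ((b k).val)
      = ∑ k ∈ Finset.range K, (1 - 2 * (if b k = 1 then (1:ℤ) else 0)) := by
        exact Finset.sum_congr rfl fun k _ => h (b k)
    _ = (K : ℤ) - 2 * ∑ k ∈ Finset.range K, (if b k = 1 then (1:ℤ) else 0) := by
        rw [Finset.sum_sub_distrib, ← Finset.mul_sum]; simp
    _ = -(bal K b) := by
        rw [Finset.sum_boole]
        unfold bal; ring

lemma aux_shift (K : ℕ) (b : ℕ → ZMod 2) (hb : Function.Periodic b K) (c : ℕ) :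
    ∑ k ∈ Finset.range K, ((-1 : ℤ)) ^ ((b (k + c)).val)
      = ∑ k ∈ Finset.range K, ((-1 : ℤ)) ^ ((b k).val) := by
  induction c with
  | zero => simp
  | succ c ih =>
      rw [← ih]
      have h1 : ∑ k ∈ Finset.range (K + 1), ((-1 : ℤ)) ^ ((b (k + c)).val)
          = (∑ k ∈ Finset.range K, ((-1 : ℤ)) ^ ((b (k + (c+1))).val))
            + ((-1 : ℤ)) ^ ((b (0 + c)).val) := by
        rw [Finset.sum_range_succ']
        congr 1
        exact Finset.sum_congr rfl fun k _ => by ring_nf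
      have h2 : ∑ k ∈ Finset.range (K + 1), ((-1 : ℤ)) ^ ((b (k + c)).val)
          = (∑ k ∈ Finset.range K, ((-1 : ℤ)) ^ ((b (k + c)).val))
            + ((-1 : ℤ)) ^ ((b (K + c)).val) := by
        rw [Finset.sum_range_succ]
      have h3 : b (K + c) = b (0 + c) := by
        have := hb c
        simpa [Nat.add_comm] using this
      rw [h3] at h2
      linarith [h1.symm.trans h2]

/-- `R_{s's}(τ) = R_{ss'}(τ) ↔ d(a_{T-τ2}) = d(a_{τ2})`. -/
theorem stmt7 (K T : ℕ) (hK : 0 < K) (hT : 0 < T)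
    (a : ℕ → ℕ → ZMod 2) (s s' : ℕ → ZMod 2)
    (ha : ∀ i, Function.Periodic (a i) K)
    (hs : Function.Periodic s (K * T)) (hs' : Function.Periodic s' (K * T))
    (hs0 : ∀ k, s (k * T) = 0) (hs'0 : ∀ k, s' (k * T) = 1)
    (hcol : ∀ k i, 1 ≤ i → i < T → s (k * T + i) = a i k)
    (hcol' : ∀ k i, 1 ≤ i → i < T → s' (k * T + i) = a i k) :
    ∀ τ1 τ2 : ℕ, 1 ≤ τ2 → τ2 < T →
      (corr (K * T) s' s (τ1 * T + τ2) = corr (K * T) s s' (τ1 * T + τ2) ↔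
        bal K (a (T - τ2)) = bal K (a τ2)) := by
  intro τ1 τ2 hτ2 hτ2T
  set τ : ℕ := τ1 * T + τ2 with hτdef
  -- s and s' agree off multiples of T
  have hss' : ∀ u : ℕ, u % T ≠ 0 → s u = s' u := by
    intro u hu
    have hlt : u % T < T := Nat.mod_lt _ hT
    have h1 : 1 ≤ u % T := Nat.one_le_iff_ne_zero.mpr hu
    have hdecomp : u = (u / T) * T + u % T := by
      rw [Nat.mul_comm]; exact (Nat.div_add_mod u T).symm
    rw [hdecomp, hcol _ _ h1 hlt, hcol' _ _ h1 hlt]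
  have hpow : ∀ x y : ZMod 2,
      ((-1 : ℤ)) ^ ((x + y).val) = (-1) ^ x.val * (-1) ^ y.val := by decide
  -- key computation
  have key : corr (K * T) s' s τ - corr (K * T) s s' τ
      = 2 * bal K (a τ2) - 2 * bal K (a (T - τ2)) := by
    have expand : corr (K * T) s' s τ - corr (K * T) s s' τ
        = (∑ t ∈ Finset.range (K * T),
            (((-1:ℤ)) ^ ((s' t).val) - ((-1:ℤ)) ^ ((s t).val)) * ((-1:ℤ)) ^ ((s (t + τ)).val))
          + ∑ t ∈ Finset.range (K * T),
            ((-1:ℤ)) ^ ((s t).val) *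
              (((-1:ℤ)) ^ ((s (t + τ)).val) - ((-1:ℤ)) ^ ((s' (t + τ)).val)) := by
      unfold corr
      rw [← Finset.sum_sub_distrib, ← Finset.sum_add_distrib]
      refine Finset.sum_congr rfl fun t _ => ?_
      rw [hpow, hpow]; ring
    have h1 : (∑ t ∈ Finset.range (K * T),
          (((-1:ℤ)) ^ ((s' t).val) - ((-1:ℤ)) ^ ((s t).val)) * ((-1:ℤ)) ^ ((s (t + τ)).val))
        = 2 * bal K (a τ2) := by
      rw [aux_split]
      have inner : ∀ k ∈ Finset.range K,
          (∑ i ∈ Finset.range T,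
            (((-1:ℤ)) ^ ((s' (k*T + i)).val) - ((-1:ℤ)) ^ ((s (k*T + i)).val))
              * ((-1:ℤ)) ^ ((s (k*T + i + τ)).val))
          = -2 * ((-1:ℤ)) ^ ((a τ2 (k + τ1)).val) := by
        intro k _
        rw [Finset.sum_eq_single_of_mem 0 (Finset.mem_range.mpr hT)]
        · have hsk : s (k*T + 0) = 0 := by simpa using hs0 k
          have hsk' : s' (k*T + 0) = 1 := by simpa using hs'0 k
          have harg : k*T + 0 + τ = (k + τ1) * T + τ2 := by rw [hτdef]; ring
          rw [hsk, hsk', harg, hcol _ _ hτ2 hτ2T]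
          norm_num [ZMod.val_one]
        · intro i hi hi0
          have h1i : 1 ≤ i := Nat.one_le_iff_ne_zero.mpr hi0
          have hiT : i < T := Finset.mem_range.mp hi
          rw [hcol _ _ h1i hiT, hcol' _ _ h1i hiT]
          ring
      rw [Finset.sum_congr rfl inner]
      rw [← Finset.mul_sum, aux_shift K (a τ2) (ha τ2) τ1, aux_bal]
      ring
    have h2 : (∑ t ∈ Finset.range (K * T),
          ((-1:ℤ)) ^ ((s t).val) *
            (((-1:ℤ)) ^ ((s (t + τ)).val) - ((-1:ℤ)) ^ ((s' (t + τ)).val)))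
        = -(2 * bal K (a (T - τ2))) := by
      rw [aux_split]
      have inner : ∀ k ∈ Finset.range K,
          (∑ i ∈ Finset.range T,
            ((-1:ℤ)) ^ ((s (k*T + i)).val) *
              (((-1:ℤ)) ^ ((s (k*T + i + τ)).val) - ((-1:ℤ)) ^ ((s' (k*T + i + τ)).val)))
          = 2 * ((-1:ℤ)) ^ ((a (T - τ2) k).val) := by
        intro k _
        have hmem : T - τ2 ∈ Finset.range T := Finset.mem_range.mpr (by omega)
        rw [Finset.sum_eq_single_of_mem (T - τ2) hmem]
        · have harg : k*T + (T - τ2) + τ = (k + τ1 + 1) * T := by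
            rw [hτdef]; zify [hτ2T.le]; ring
          have h1i : 1 ≤ T - τ2 := by omega
          have hiT : T - τ2 < T := by omega
          rw [harg, hs0 (k + τ1 + 1), hs'0 (k + τ1 + 1), hcol _ _ h1i hiT]
          norm_num [ZMod.val_one]
          ring
        · intro i hi hi0
          have hiT : i < T := Finset.mem_range.mp hi
          have hmod : (k*T + i + τ) % T = (i + τ2) % T := by
            have : k*T + i + τ = (i + τ2) + (k + τ1) * T := by rw [hτdef]; ring
            rw [this, Nat.add_mul_mod_self_right]
          have hne : (k*T + i + τ) % T ≠ 0 := by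
            rw [hmod]
            rcases Nat.lt_or_ge (i + τ2) T with h | h
            · rw [Nat.mod_eq_of_lt h]; omega
            · rw [Nat.mod_eq_sub_mod h, Nat.mod_eq_of_lt (by omega)]; omega
          rw [hss' _ hne]
          ring
      rw [Finset.sum_congr rfl inner, ← Finset.mul_sum, aux_bal]
      ring
    rw [expand, h1, h2]; ring
  constructor
  · intro h; nlinarith [key]
  · intro h; nlinarith [key]
end

section
/- Suppose d(a_{τ_2}) + d(a_{T-τ_2}) = 0 for all 1 ≤ τ_2 ≤ T-1. Then the sequence s' = I(1_K, a_1, ..., a_{T-1}) has ideal autocorrelation (R_{s'}(τ) = -1 for all τ ≢ 0 mod KT) if and only if s = I(0_K, a_1, ..., a_{T-1}) has ideal autocorrelation. -/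
/-!
Write `τ = τ₁ T + τ₂` with `τ₂ < T` and split the correlation sum according to the column
`t mod T`. Since `s` and `s'` differ only in column `0`, a column contributes differently to
`R_s(τ)` and `R_{s'}(τ)` only if `t` or `t + τ` lies in column `0`. If `τ₂ = 0` this is column `0`
against itself, contributing `(-1)^(c + c) = 1` for either constant `c`. Otherwise it is column `0`
against column `τ₂` and column `T - τ₂` against column `0`, which contribute
`-(-1)^c d(a_{τ₂})` and `-(-1)^c d(a_{T-τ₂})`; hence
`R_{s'}(τ) - R_s(τ) = 2 (d(a_{τ₂}) + d(a_{T-τ₂})) = 0`.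
-/

open Finset

theorem Finset.sum_range_mul_eq_sum_sum {M : Type*} [AddCommMonoid M] (K T : ℕ) (F : ℕ → M) :
    ∑ t ∈ range (K * T), F t = ∑ i ∈ range T, ∑ k ∈ range K, F (k * T + i) := by
  induction K with
  | zero => simp
  | succ K ih =>
    rw [Nat.succ_mul, sum_range_add, ih, ← sum_add_distrib]
    simp only [sum_range_succ]

theorem Function.Periodic.sum_range_add {M : Type*} [AddCancelCommMonoid M] {f : ℕ → M} {K : ℕ}
    (hf : Function.Periodic f K) (c : ℕ) :
    ∑ k ∈ range K, f (k + c) = ∑ k ∈ range K, f k := by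
  induction c with
  | zero => simp
  | succ c ih =>
    refine ih ▸ add_right_cancel (b := f c) ?_
    calc ∑ k ∈ range K, f (k + (c + 1)) + f c
        = ∑ k ∈ range (K + 1), f (k + c) := by
          rw [sum_range_succ']; simp only [add_right_comm _ 1 c, add_assoc, zero_add]
      _ = ∑ k ∈ range K, f (k + c) + f c := by rw [sum_range_succ, add_comm K c, hf]

theorem neg_one_pow_val_add (x y : ZMod 2) :
    (-1 : ℤ) ^ (x + y).val = (-1) ^ x.val * (-1) ^ y.val := by
  decide +revert

theorem sum_neg_one_pow_val_eq_neg_bal (K : ℕ) (a : ℕ → ZMod 2) :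
    ∑ k ∈ range K, (-1 : ℤ) ^ (a k).val = -bal K a := by
  have h (x : ZMod 2) : (-1 : ℤ) ^ x.val = 1 - 2 * if x = 1 then 1 else 0 := by decide +revert
  simp only [h, sum_sub_distrib, ← mul_sum, sum_boole, sum_const, card_range, bal]
  ring

/-- `u = I(c, a₁, …, a_{T-1})`: `u (k * T + i) = a i k`, with constant `0`-th column `c`. -/
structure IsInterleaving (T : ℕ) (c : ZMod 2) (a : ℕ → ℕ → ZMod 2) (u : ℕ → ZMod 2) : Prop where
  apply_mul : ∀ k, u (k * T) = c
  apply_mul_add : ∀ k i, 1 ≤ i → i < T → u (k * T + i) = a i k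

def columnCorr (K T : ℕ) (u : ℕ → ZMod 2) (τ i : ℕ) : ℤ :=
  ∑ k ∈ range K, (-1 : ℤ) ^ (u (k * T + i) + u (k * T + i + τ)).val

section IsInterleaving

variable {K T τ₁ τ₂ i : ℕ} {a : ℕ → ℕ → ZMod 2} {c c' : ZMod 2} {u v : ℕ → ZMod 2}

theorem corr_mul_eq_sum_columnCorr (K T : ℕ) (u : ℕ → ZMod 2) (τ : ℕ) :
    corr (K * T) u u τ = ∑ i ∈ range T, columnCorr K T u τ i :=
  sum_range_mul_eq_sum_sum K T _

theorem IsInterleaving.apply_eq (hu : IsInterleaving T c a u) (hv : IsInterleaving T c' a v)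
    (k : ℕ) (hi₁ : 1 ≤ i) (hiT : i < T) : u (k * T + i) = v (k * T + i) :=
  (hu.apply_mul_add k i hi₁ hiT).trans (hv.apply_mul_add k i hi₁ hiT).symm

theorem IsInterleaving.columnCorr_eq (hu : IsInterleaving T c a u)
    (hv : IsInterleaving T c' a v) (hi₁ : 1 ≤ i) (hiT : i < T) (hτ₂ : τ₂ < T) (hiτ₂ : i + τ₂ ≠ T) :
    columnCorr K T u (τ₁ * T + τ₂) i = columnCorr K T v (τ₁ * T + τ₂) i := by
  refine sum_congr rfl fun k _ => ?_
  obtain ⟨k', i', hk', hi'₁, hi'T⟩ : ∃ k' i', k * T + i + (τ₁ * T + τ₂) = k' * T + i' ∧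
      1 ≤ i' ∧ i' < T := by
    rcases lt_or_ge (i + τ₂) T with h | h
    · exact ⟨k + τ₁, i + τ₂, by ring, by omega, h⟩
    · exact ⟨k + τ₁ + 1, i + τ₂ - T, by zify [h]; ring, by omega, by omega⟩
  rw [hk', hu.apply_eq hv k hi₁ hiT, hu.apply_eq hv k' hi'₁ hi'T]

theorem IsInterleaving.columnCorr_zero_eq_of_dvd (hu : IsInterleaving T c a u)
    (hv : IsInterleaving T c' a v) :
    columnCorr K T u (τ₁ * T) 0 = columnCorr K T v (τ₁ * T) 0 := by
  refine sum_congr rfl fun k _ => ?_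
  rw [add_zero, ← add_mul, hu.apply_mul, hu.apply_mul, hv.apply_mul, hv.apply_mul,
    CharTwo.add_self_eq_zero, CharTwo.add_self_eq_zero]

theorem IsInterleaving.columnCorr_zero (hu : IsInterleaving T c a u)
    (ha : Function.Periodic (a τ₂) K) (hτ₂ : 1 ≤ τ₂) (hτ₂T : τ₂ < T) :
    columnCorr K T u (τ₁ * T + τ₂) 0 = -(-1) ^ c.val * bal K (a τ₂) := by
  have hterm (k : ℕ) : u (k * T + 0) + u (k * T + 0 + (τ₁ * T + τ₂)) = c + a τ₂ (k + τ₁) := by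
    rw [add_zero, hu.apply_mul, ← hu.apply_mul_add _ _ hτ₂ hτ₂T]
    ring_nf
  have hshift : ∑ k ∈ range K, (-1 : ℤ) ^ (a τ₂ (k + τ₁)).val = -bal K (a τ₂) :=
    ((ha.comp fun x => (-1 : ℤ) ^ x.val).sum_range_add τ₁).trans
      (sum_neg_one_pow_val_eq_neg_bal K (a τ₂))
  simp only [columnCorr, hterm, neg_one_pow_val_add, ← mul_sum, hshift]
  ring

theorem IsInterleaving.columnCorr_tsub (hu : IsInterleaving T c a u) (hτ₂ : 1 ≤ τ₂)
    (hτ₂T : τ₂ < T) :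
    columnCorr K T u (τ₁ * T + τ₂) (T - τ₂) = -(-1) ^ c.val * bal K (a (T - τ₂)) := by
  have hterm (k : ℕ) : u (k * T + (T - τ₂)) + u (k * T + (T - τ₂) + (τ₁ * T + τ₂)) =
      c + a (T - τ₂) k := by
    rw [hu.apply_mul_add _ _ (by omega) (by omega), add_comm,
      show k * T + (T - τ₂) + (τ₁ * T + τ₂) = (k + τ₁ + 1) * T by zify [hτ₂T.le]; ring,
      hu.apply_mul]
  simp only [columnCorr, hterm, neg_one_pow_val_add, ← mul_sum, sum_neg_one_pow_val_eq_neg_bal]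
  ring

theorem IsInterleaving.corr_eq_of_dvd (hu : IsInterleaving T c a u)
    (hv : IsInterleaving T c' a v) :
    corr (K * T) u u (τ₁ * T) = corr (K * T) v v (τ₁ * T) := by
  simp only [corr_mul_eq_sum_columnCorr]
  refine sum_congr rfl fun i hi => ?_
  rcases Nat.eq_zero_or_pos i with rfl | hi₁
  · exact hu.columnCorr_zero_eq_of_dvd hv
  · have hiT := mem_range.mp hi
    simpa using hu.columnCorr_eq hv (τ₂ := 0) hi₁ hiT (by omega) (by omega)

theorem IsInterleaving.corr_sub_corr (hu : IsInterleaving T c a u)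
    (hv : IsInterleaving T c' a v) (ha : Function.Periodic (a τ₂) K) (hτ₂ : 1 ≤ τ₂)
    (hτ₂T : τ₂ < T) :
    corr (K * T) u u (τ₁ * T + τ₂) - corr (K * T) v v (τ₁ * T + τ₂) =
      ((-1) ^ c'.val - (-1) ^ c.val) * (bal K (a τ₂) + bal K (a (T - τ₂))) := by
  have hcols : ({0, T - τ₂} : Finset ℕ) ⊆ range T := by
    intro x hx
    simp only [mem_insert, mem_singleton] at hx
    rw [mem_range]
    omega
  simp only [corr_mul_eq_sum_columnCorr, ← sum_sub_distrib]
  rw [← sum_subset hcols fun i hi hi' => ?_, sum_pair (by omega), hu.columnCorr_zero ha hτ₂ hτ₂T,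
    hv.columnCorr_zero ha hτ₂ hτ₂T, hu.columnCorr_tsub hτ₂ hτ₂T, hv.columnCorr_tsub hτ₂ hτ₂T]
  · ring
  · simp only [mem_insert, mem_singleton, not_or] at hi'
    rw [hu.columnCorr_eq hv (by omega) (mem_range.mp hi) hτ₂T (by omega), sub_self]

end IsInterleaving

theorem stmt9_general (K T : ℕ)
    (a : ℕ → ℕ → ZMod 2) (s s' : ℕ → ZMod 2)
    (ha : ∀ i, Function.Periodic (a i) K)
    (hs0 : ∀ k, s (k * T) = 0) (hs'0 : ∀ k, s' (k * T) = 1)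
    (hcol : ∀ k i, 1 ≤ i → i < T → s (k * T + i) = a i k)
    (hcol' : ∀ k i, 1 ≤ i → i < T → s' (k * T + i) = a i k)
    (hbal : ∀ τ2 : ℕ, 1 ≤ τ2 → τ2 < T → bal K (a τ2) + bal K (a (T - τ2)) = 0) :
    (∀ τ : ℕ, 1 ≤ τ → τ < K * T → corr (K * T) s' s' τ = -1) ↔
    (∀ τ : ℕ, 1 ≤ τ → τ < K * T → corr (K * T) s s τ = -1) := by
  have hv : IsInterleaving T 0 a s := ⟨hs0, hcol⟩
  have hu : IsInterleaving T 1 a s' := ⟨hs'0, hcol'⟩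
  have hcorr (τ : ℕ) : corr (K * T) s' s' τ = corr (K * T) s s τ := by
    rcases T.eq_zero_or_pos with rfl | hT
    · simp [corr]
    rw [← Nat.div_add_mod' τ T]
    rcases Nat.eq_zero_or_pos (τ % T) with h | h
    · rw [h, add_zero]
      exact hu.corr_eq_of_dvd hv
    · rw [← sub_eq_zero, hu.corr_sub_corr hv (ha _) h (Nat.mod_lt τ hT), hbal _ h (Nat.mod_lt τ hT),
        mul_zero]
  simp only [hcorr]

/-- If `d(a_{τ2}) + d(a_{T-τ2}) = 0` for all `1 ≤ τ2 ≤ T-1`, then `s'` has ideal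
autocorrelation iff `s` does. -/
theorem stmt9 (K T : ℕ) (hK : 0 < K) (hT : 0 < T)
    (a : ℕ → ℕ → ZMod 2) (s s' : ℕ → ZMod 2)
    (ha : ∀ i, Function.Periodic (a i) K)
    (hs : Function.Periodic s (K * T)) (hs' : Function.Periodic s' (K * T))
    (hs0 : ∀ k, s (k * T) = 0) (hs'0 : ∀ k, s' (k * T) = 1)
    (hcol : ∀ k i, 1 ≤ i → i < T → s (k * T + i) = a i k)
    (hcol' : ∀ k i, 1 ≤ i → i < T → s' (k * T + i) = a i k)
    (hbal : ∀ τ2 : ℕ, 1 ≤ τ2 → τ2 < T → bal K (a τ2) + bal K (a (T - τ2)) = 0) :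
    (∀ τ : ℕ, 1 ≤ τ → τ < K * T → corr (K * T) s' s' τ = -1) ↔
    (∀ τ : ℕ, 1 ≤ τ → τ < K * T → corr (K * T) s s τ = -1) :=
  stmt9_general K T a s s' ha hs0 hs'0 hcol hcol' hbal
end

section
/- Let p ≡ 3 (mod 4) be a prime and let l be a Legendre sequence of period p (of either type). Then l has ideal autocorrelation: R_l(τ) = -1 for all τ with 1 ≤ τ ≤ p-1. -/
open Finset

theorem MulChar.IsQuadratic.sum_mul_apply_add {F R : Type*} [Field F] [Fintype F] [CommRing R]
    [IsDomain R] {χ : MulChar F R} (hχ : χ.IsQuadratic)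
    (hχ1 : χ ≠ 1) {b : F} (hb : b ≠ 0) : ∑ x, χ x * χ (x + b) = -1 := by
  have hsq : ∀ {y : F}, y ≠ 0 → χ y * χ y = 1 := fun hy => by
    rw [← sq, ← MulChar.pow_apply' χ two_ne_zero, hχ.sq_eq_one,
      MulChar.one_apply (Ne.isUnit hy)]
  calc ∑ x, χ x * χ (x + b) = ∑ y, χ (-b * y) * χ (-b * y + b) :=
        (Equiv.sum_comp (Equiv.mulLeft₀ (-b) (neg_ne_zero.mpr hb)) fun x => χ x * χ (x + b)).symm
    _ = ∑ y, χ (-1) * (χ b * χ b) * (χ y * χ⁻¹ (1 - y)) := by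
        refine sum_congr rfl fun y _ => ?_
        rw [hχ.inv, show -b * y + b = b * (1 - y) by ring, show -b * y = -1 * b * y by ring,
          map_mul, map_mul, map_mul]
        ring
    _ = χ (-1) * -χ (-1) := by
        rw [← mul_sum, hsq hb, mul_one, ← jacobiSum_nontrivial_inv hχ1, jacobiSum]
    _ = -1 := by rw [mul_neg, hsq (neg_ne_zero.mpr one_ne_zero)]

theorem sum_mul_add_eq_of_eqOn_ne_zero {G R : Type*} [AddCommGroup G] [Fintype G] [DecidableEq G]
    [CommRing R] {g h : G → R} (hgh : ∀ x, x ≠ 0 → g x = h x) (h0 : h 0 = 0) {b : G} (hb : b ≠ 0) :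
    ∑ x, g x * g (x + b) = ∑ x, h x * h (x + b) + g 0 * (h b + h (-b)) := by
  have hg : g = fun x => h x + if x = 0 then g 0 else 0 := by
    funext x
    by_cases hx : x = 0
    · simp [hx, h0]
    · simp [hx, hgh x hx]
  have hterm : ∀ x, g x * g (x + b) = h x * h (x + b) + (if x = 0 then g 0 * h b else 0)
      + (if x = -b then h (-b) * g 0 else 0) := by
    intro x
    rw [hg]
    by_cases hx : x = 0
    · simp [hx, hb, h0]
    · by_cases hxb : x = -b
      · simp [hxb, hb, h0]
      · have : x + b ≠ 0 := fun hxb0 => hxb (eq_neg_of_add_eq_zero_left hxb0)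
        simp [hx, hxb, this]
  simp only [hterm, sum_add_distrib, sum_ite_eq', mem_univ, if_true]
  ring

theorem sum_range_natCast_eq_sum_zmod {M : Type*} [AddCommMonoid M] (N : ℕ) [NeZero N]
    (f : ZMod N → M) : ∑ t ∈ range N, f t = ∑ x : ZMod N, f x :=
  sum_nbij' (↑) ZMod.val (by simp) (by simp [ZMod.val_lt])
    (fun _ ht => ZMod.val_natCast_of_lt (mem_range.mp ht)) (fun x _ => ZMod.natCast_zmod_val x)
    (fun _ _ => rfl)

theorem ZMod.neg_one_pow_val_add (a b : ZMod 2) :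
    (-1 : ℤ) ^ (a + b).val = (-1) ^ a.val * (-1) ^ b.val := by
  revert a b; decide

theorem ZMod.eq_of_eq_zero_iff_eq_zero {u v : ZMod 2} : (u = 0 ↔ v = 0) → u = v := by
  revert u v; decide

theorem neg_one_pow_val_eq_quadraticChar {F : Type*} [Field F] [Fintype F] [DecidableEq F]
    {a : ZMod 2} {x : F} (hx : x ≠ 0) (h : a = 0 ↔ IsSquare x) :
    (-1 : ℤ) ^ a.val = quadraticChar F x := by
  fin_cases a
  · rw [(quadraticChar_one_iff_isSquare hx).mpr (h.mp rfl)]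
    rfl
  · rw [quadraticChar_neg_one_iff_not_isSquare.mpr fun hsq => one_ne_zero (h.mpr hsq)]
    rfl

theorem corr_eq_sum_zmod (N : ℕ) [NeZero N] {a b : ℕ → ZMod 2}
    (ha : ∀ n, a n = a (n : ZMod N).val) (hb : ∀ n, b n = b (n : ZMod N).val) (τ : ℕ) :
    corr N a b τ = ∑ x : ZMod N, (-1 : ℤ) ^ (a x.val).val * (-1) ^ (b (x + τ).val).val := by
  rw [corr, ← sum_range_natCast_eq_sum_zmod]
  refine sum_congr rfl fun t _ => ?_
  rw [ZMod.neg_one_pow_val_add, ha, hb, Nat.cast_add]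

theorem apply_eq_apply_val_of_legendre {p : ℕ} [NeZero p] {l : ℕ → ZMod 2}
    (hl : ∀ t : ℕ, (t : ZMod p) ≠ 0 → (l t = 0 ↔ IsSquare ((t : ZMod p))))
    (hl0 : ∀ t : ℕ, (t : ZMod p) = 0 → l t = l 0) (n : ℕ) : l n = l (n : ZMod p).val := by
  by_cases hn : (n : ZMod p) = 0
  · rw [hn, ZMod.val_zero, hl0 n hn]
  · have hval : ((n : ZMod p).val : ZMod p) = n := ZMod.natCast_zmod_val _
    exact ZMod.eq_of_eq_zero_iff_eq_zero ((hl n hn).trans (hval ▸ hl _ (hval ▸ hn)).symm)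

/-- A Legendre sequence of period a prime `p ≡ 3 (mod 4)` has ideal autocorrelation. -/
theorem stmt10 (p : ℕ) (hp : p.Prime) (hp4 : p % 4 = 3) (l : ℕ → ZMod 2)
    (hl : ∀ t : ℕ, (t : ZMod p) ≠ 0 → (l t = 0 ↔ IsSquare ((t : ZMod p))))
    (hl0 : ∀ t : ℕ, (t : ZMod p) = 0 → l t = l 0) :
    ∀ τ : ℕ, 1 ≤ τ → τ < p → corr p l l τ = -1 := by
  intro τ hτ1 hτp
  have := Fact.mk hp
  have hchar : ringChar (ZMod p) ≠ 2 := by rw [ZMod.ringChar_zmod_n]; omega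
  have hτ : (τ : ZMod p) ≠ 0 := by
    rw [Ne, ZMod.natCast_eq_zero_iff]
    exact Nat.not_dvd_of_pos_of_lt hτ1 hτp
  have hχ : quadraticChar (ZMod p) (-1) = -1 := by
    rw [quadraticChar_neg_one hchar, ZMod.card, ZMod.χ₄_nat_three_mod_four hp4]
  have hsign : ∀ x : ZMod p, x ≠ 0 → (-1 : ℤ) ^ (l x.val).val = quadraticChar (ZMod p) x :=
    fun x hx => neg_one_pow_val_eq_quadraticChar hx <| by
      simpa only [ZMod.natCast_zmod_val] using hl x.val (by rwa [ZMod.natCast_zmod_val])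
  have hper := apply_eq_apply_val_of_legendre hl hl0
  rw [corr_eq_sum_zmod p hper hper, sum_mul_add_eq_of_eqOn_ne_zero hsign (MulChar.map_zero _) hτ,
    (quadraticChar_isQuadratic _).sum_mul_apply_add (quadraticChar_ne_one hchar) hτ,
    neg_eq_neg_one_mul (τ : ZMod p), map_mul, hχ]
  ring
end

section
/- Let s = I(0_K, a_1, ..., a_{T-1}) and s' = I(1_K, a_1, ..., a_{T-1}) where every a_i satisfies d(a_i) = 1, and suppose s has ideal autocorrelation R_s(τ) = -1 for all τ ≢ 0 (mod KT). Then for τ = τ_1 T + τ_2 with 1 ≤ τ_2 ≤ T-1, R_{s'}(τ) = 3, and for τ = τ_1 T ≠ 0, R_{s'}(τ) = -1; in particular s' has 3-level autocorrelation taking only values {KT, -1, 3}. -/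
private lemma chi4 : ∀ p q c d : ZMod 2,
    (-1:ℤ) ^ (((p + c) + (q + d)).val) =
      (-1:ℤ) ^ (c.val) * (-1:ℤ) ^ (d.val) * (-1:ℤ) ^ ((p + q).val) := by
  decide

private lemma chi_self : ∀ x : ZMod 2, (-1:ℤ) ^ ((x + x).val) = 1 := by decide

private lemma chi_val : ∀ x : ZMod 2,
    (-1:ℤ) ^ x.val = 1 - 2 * (if x = 1 then (1:ℤ) else 0) := by decide

private lemma chi_sq : ∀ x : ZMod 2, (-1:ℤ) ^ x.val * (-1:ℤ) ^ x.val = 1 := by decide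

private lemma chi_one : (-1:ℤ) ^ (1 : ZMod 2).val = -1 := by decide

private lemma chi_zero : (-1:ℤ) ^ (0 : ZMod 2).val = 1 := by decide

private lemma sum_grid (g : ℕ → ℤ) (K T : ℕ) :
    ∑ t ∈ Finset.range (K * T), g t
      = ∑ k ∈ Finset.range K, ∑ i ∈ Finset.range T, g (k * T + i) := by
  induction K with
  | zero => simp
  | succ n ih =>
    rw [Nat.succ_mul, Finset.sum_range_add, ih, Finset.sum_range_succ]

private lemma sum_shift (f : ℕ → ℤ) (K : ℕ) (hf : Function.Periodic f K) (m : ℕ) :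
    ∑ k ∈ Finset.range K, f (k + m) = ∑ k ∈ Finset.range K, f k := by
  induction m with
  | zero => simp
  | succ n ih =>
    rw [← ih]
    rcases Nat.eq_zero_or_pos K with h | h
    · simp [h]
    obtain ⟨K', rfl⟩ := Nat.exists_eq_succ_of_ne_zero h.ne'
    rw [Finset.sum_range_succ, Finset.sum_range_succ']
    have h1 : f (K' + (n + 1)) = f n := by
      have h2 := hf n
      rw [show K' + (n + 1) = n + (K' + 1) by omega, h2]
    rw [h1]
    congr 1
    · exact Finset.sum_congr rfl fun k _ => by congr 1; omega
    · congr 1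
      omega

private lemma sum_chi (K : ℕ) (a : ℕ → ZMod 2) :
    ∑ k ∈ Finset.range K, (-1:ℤ) ^ ((a k).val) = -(bal K a) := by
  simp_rw [chi_val]
  rw [Finset.sum_sub_distrib, ← Finset.mul_sum, Finset.sum_boole, bal]
  simp only [Finset.sum_const, Finset.card_range, nsmul_eq_mul, mul_one]
  ring

/-- If every `d(a_i) = 1` and `s` has ideal autocorrelation, then `s'` has 3-level
autocorrelation with values `{KT, -1, 3}`. -/
theorem stmt16 (K T : ℕ) (hK : 0 < K) (hT : 0 < T)
    (a : ℕ → ℕ → ZMod 2) (s s' : ℕ → ZMod 2)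
    (ha : ∀ i, Function.Periodic (a i) K)
    (hs : Function.Periodic s (K * T)) (hs' : Function.Periodic s' (K * T))
    (hs0 : ∀ k, s (k * T) = 0) (hs'0 : ∀ k, s' (k * T) = 1)
    (hcol : ∀ k i, 1 ≤ i → i < T → s (k * T + i) = a i k)
    (hcol' : ∀ k i, 1 ≤ i → i < T → s' (k * T + i) = a i k)
    (hbal : ∀ i : ℕ, 1 ≤ i → i < T → bal K (a i) = 1)
    (hideal : ∀ τ : ℕ, ¬ (K * T ∣ τ) → corr (K * T) s s τ = -1) :
    (∀ τ1 τ2 : ℕ, 1 ≤ τ2 → τ2 < T → corr (K * T) s' s' (τ1 * T + τ2) = 3) ∧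
    (∀ τ1 : ℕ, ¬ (K * T ∣ τ1 * T) → corr (K * T) s' s' (τ1 * T) = -1) ∧
    (∀ τ : ℕ, corr (K * T) s' s' τ = (K : ℤ) * T ∨ corr (K * T) s' s' τ = -1 ∨
      corr (K * T) s' s' τ = 3) := by
  -- the "column indicator" δ
  set δ : ℕ → ZMod 2 := fun t => if t % T = 0 then 1 else 0 with hδ
  have hdelta : ∀ t, s' t = s t + δ t := by
    intro t
    have hdm := Nat.div_add_mod' t T
    by_cases h : t % T = 0
    · have ht : t = (t / T) * T := by omega
      simp only [hδ, h, if_pos rfl]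
      rw [ht, hs0, hs'0]
      decide
    · have h1 : 1 ≤ t % T := Nat.one_le_iff_ne_zero.mpr h
      have h2 : t % T < T := Nat.mod_lt _ hT
      have ht : t = (t / T) * T + t % T := by omega
      simp only [hδ, if_neg h]
      rw [ht, hcol _ _ h1 h2, hcol' _ _ h1 h2, add_zero]
  -- pointwise decomposition of the correlation terms
  have hpt : ∀ t τ : ℕ, (-1:ℤ) ^ ((s' t + s' (t + τ)).val)
      = (-1:ℤ) ^ ((δ t).val) * (-1:ℤ) ^ ((δ (t + τ)).val)
        * (-1:ℤ) ^ ((s t + s (t + τ)).val) := by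
    intro t τ
    rw [hdelta t, hdelta (t + τ), chi4]
  -- Part 2 : τ = τ1 * T
  have part2 : ∀ τ1 : ℕ, ¬ (K * T ∣ τ1 * T) → corr (K * T) s' s' (τ1 * T) = -1 := by
    intro τ1 hnd
    have : corr (K * T) s' s' (τ1 * T) = corr (K * T) s s (τ1 * T) := by
      unfold corr
      apply Finset.sum_congr rfl
      intro t _
      rw [hpt]
      have hmod : (t + τ1 * T) % T = t % T := Nat.add_mul_mod_self_right t τ1 T
      have hde : δ (t + τ1 * T) = δ t := by simp only [hδ, hmod]
      rw [hde, chi_sq, one_mul]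
    rw [this, hideal _ hnd]
  -- Part 1 : τ = τ1 * T + τ2 with 1 ≤ τ2 < T
  have part1 : ∀ τ1 τ2 : ℕ, 1 ≤ τ2 → τ2 < T →
      corr (K * T) s' s' (τ1 * T + τ2) = 3 := by
    intro τ1 τ2 hτ2a hτ2b
    set τ := τ1 * T + τ2 with hτdef
    have hτmod : τ % T = τ2 := by
      rw [hτdef, Nat.add_comm, Nat.add_mul_mod_self_right, Nat.mod_eq_of_lt hτ2b]
    set c : ℕ → ℤ := fun t => (-1:ℤ) ^ ((s t + s (t + τ)).val) with hc
    -- pointwise: new term = old term − 2·(ite col 0) − 2·(ite col 0 for t+τ)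
    have hstep : corr (K * T) s' s' τ
        = corr (K * T) s s τ
          - 2 * (∑ t ∈ Finset.range (K * T), if t % T = 0 then c t else 0)
          - 2 * (∑ t ∈ Finset.range (K * T), if (t + τ) % T = 0 then c t else 0) := by
      unfold corr
      rw [Finset.mul_sum, Finset.mul_sum, ← Finset.sum_sub_distrib, ← Finset.sum_sub_distrib]
      apply Finset.sum_congr rfl
      intro t _
      rw [hpt]
      by_cases h1 : t % T = 0
      · have h2 : (t + τ) % T ≠ 0 := by
          rw [show t + τ = τ + t from Nat.add_comm _ _]
          rw [Nat.add_mod, hτmod, h1]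
          simpa [Nat.mod_eq_of_lt hτ2b] using Nat.pos_iff_ne_zero.mp hτ2a
        simp only [hδ, if_pos h1, if_neg h2, chi_one, chi_zero, hc]
        ring
      · by_cases h2 : (t + τ) % T = 0
        · simp only [hδ, if_neg h1, if_pos h2, chi_one, chi_zero, hc]
          ring
        · simp only [hδ, if_neg h1, if_neg h2, chi_one, chi_zero, hc]
          ring
    -- first correction sum
    have hA : (∑ t ∈ Finset.range (K * T), if t % T = 0 then c t else 0) = -1 := by
      rw [sum_grid]
      have hinner : ∀ k, (∑ i ∈ Finset.range T, if (k * T + i) % T = 0 then c (k * T + i) else 0)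
          = (-1:ℤ) ^ ((a τ2 (k + τ1)).val) := by
        intro k
        have : ∀ i ∈ Finset.range T,
            (if (k * T + i) % T = 0 then c (k * T + i) else 0)
              = (if i = 0 then c (k * T + i) else 0) := by
          intro i hi
          have hi' : i < T := Finset.mem_range.mp hi
          rw [show k * T + i = i + k * T from Nat.add_comm _ _, Nat.add_mul_mod_self_right,
            Nat.mod_eq_of_lt hi']
        rw [Finset.sum_congr rfl this, Finset.sum_ite_eq' (Finset.range T) 0,
          if_pos (Finset.mem_range.mpr hT)]
        have harg : k * T + τ = (k + τ1) * T + τ2 := by rw [hτdef]; ring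
        simp only [hc, Nat.add_zero]
        rw [harg, hs0 k, hcol _ _ hτ2a hτ2b, zero_add]
      rw [Finset.sum_congr rfl fun k _ => hinner k]
      have hper : Function.Periodic (fun k => (-1:ℤ) ^ ((a τ2 k).val)) K := by
        intro x; simp [ha τ2 x]
      rw [sum_shift _ K hper τ1, sum_chi, hbal _ hτ2a hτ2b]
    -- second correction sum
    have hB : (∑ t ∈ Finset.range (K * T), if (t + τ) % T = 0 then c t else 0) = -1 := by
      rw [sum_grid]
      have h1T : 1 ≤ T - τ2 := by omega
      have h2T : T - τ2 < T := by omega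
      have hinner : ∀ k,
          (∑ i ∈ Finset.range T, if (k * T + i + τ) % T = 0 then c (k * T + i) else 0)
            = (-1:ℤ) ^ ((a (T - τ2) k).val) := by
        intro k
        have hiff : ∀ i, i < T → (((k * T + i + τ) % T = 0) ↔ i = T - τ2) := by
          intro i hi
          have harg : k * T + i + τ = (i + τ2) + (k + τ1) * T := by rw [hτdef]; ring
          rw [harg, Nat.add_mul_mod_self_right]
          constructor
          · intro h
            obtain ⟨m, hm⟩ := Nat.dvd_of_mod_eq_zero h
            have hm0 : m ≠ 0 := by rintro rfl; omega
            have hm2 : m < 2 := by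
              by_contra hge
              have h2m : T * 2 ≤ T * m := Nat.mul_le_mul_left T (by omega)
              omega
            have hm1 : m = 1 := by omega
            subst hm1
            omega
          · intro h
            have : i + τ2 = T := by omega
            simp [this]
        have : ∀ i ∈ Finset.range T,
            (if (k * T + i + τ) % T = 0 then c (k * T + i) else 0)
              = (if i = T - τ2 then c (k * T + i) else 0) := by
          intro i hi
          rw [if_congr (hiff i (Finset.mem_range.mp hi)) rfl rfl]
        rw [Finset.sum_congr rfl this, Finset.sum_ite_eq' (Finset.range T) (T - τ2),
          if_pos (Finset.mem_range.mpr h2T)]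
        have harg : k * T + (T - τ2) + τ = (k + τ1 + 1) * T := by
          have hsub : T - τ2 + τ2 = T := Nat.sub_add_cancel (le_of_lt hτ2b)
          rw [hτdef, show k * T + (T - τ2) + (τ1 * T + τ2)
              = k * T + (T - τ2 + τ2) + τ1 * T from by ring, hsub]
          ring
        simp only [hc, harg]
        rw [hs0 (k + τ1 + 1), hcol _ _ h1T h2T, add_zero]
      rw [Finset.sum_congr rfl fun k _ => hinner k, sum_chi, hbal _ h1T h2T]
    have hnd : ¬ (K * T ∣ τ) := by
      intro h
      have hTd : T ∣ τ := dvd_trans (dvd_mul_left T K) h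
      rw [Nat.dvd_iff_mod_eq_zero] at hTd
      omega
    rw [hstep, hA, hB, hideal _ hnd]
    ring
  refine ⟨part1, part2, ?_⟩
  -- Part 3
  intro τ
  by_cases hd : K * T ∣ τ
  · left
    obtain ⟨m, hm⟩ := hd
    unfold corr
    have : ∀ t ∈ Finset.range (K * T), (-1:ℤ) ^ ((s' t + s' (t + τ)).val) = 1 := by
      intro t _
      have : s' (t + τ) = s' t := by
        rw [hm, show K * T * m = m * (K * T) from Nat.mul_comm _ _]
        exact hs'.nat_mul m t
      rw [this, chi_self]
    rw [Finset.sum_congr rfl this]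
    simp [mul_comm]
  · have hdm := Nat.div_add_mod' τ T
    by_cases h0 : τ % T = 0
    · right; left
      have hτ : τ = (τ / T) * T := by omega
      rw [hτ] at hd ⊢
      exact part2 _ hd
    · right; right
      have hτ : τ = (τ / T) * T + τ % T := by omega
      rw [hτ]
      exact part1 _ _ (Nat.one_le_iff_ne_zero.mpr h0) (Nat.mod_lt _ hT)
end
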